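/- Let K ≥ 3 and d ≥ 1, let ρ : ℝ → [0,∞) satisfy {ρ(u) : u ∈ ℝ} = [0,∞), and let τ : ℝ → ℝ be non-increasing on u < 0, non-decreasing on u > 0, with {τ(u) : u ≤ 0} = {τ(u) : u ≥ 0} = [τ(0), ∞). Define the VSL link P_vsl(y; u) = P_sl(y; τ(ρ[u])) and, for r ∈ [0,1], the mixture model P_maul,r(y; (u, w)) = (1−r)·P_vsl(y; u) + r·P_sl(y; w) over the learner class G_2K of all pairs of functions g_1, g_2 : ℝ^d → ℝ^K. Then {p : ℝ^d → Δ̂_{K-1}^∅} ⊆ R(P_maul,r, G_2K) ⊆ {p : ℝ^d → (Δ̂_{K-1}^{√2·r})^∅}. -/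

import Mathlib

open scoped BigOperators

noncomputable section

/-- The probability simplex Δ_{K-1} ⊆ ℝ^K. -/
def simplex (K : ℕ) : Set (Fin K → ℝ) :=
  {p | (∑ k, p k) = 1 ∧ ∀ k, 0 ≤ p k ∧ p k ≤ 1}

/-- A PMF (vector) is unimodal: there is a mode M such that p is
nondecreasing up to M and nonincreasing after M. -/
def Unimodal {K : ℕ} (p : Fin K → ℝ) : Prop :=
  ∃ M : Fin K, (∀ k, p k ≤ p M) ∧
    (∀ i j : Fin K, i ≤ j → j ≤ M → p i ≤ p j) ∧
    (∀ i j : Fin K, M ≤ i → i ≤ j → p j ≤ p i)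

/-- Δ̂_{K-1}: the set of unimodal PMFs. -/
def uniSimplex (K : ℕ) : Set (Fin K → ℝ) :=
  {p | p ∈ simplex K ∧ Unimodal p}

/-- The stereotype logit (SL) link function. -/
def Psl {K : ℕ} (u : Fin K → ℝ) (y : Fin K) : ℝ :=
  Real.exp (-(u y)) / ∑ k, Real.exp (-(u k))

/-- The ordering transform ρ[u]: (ρ[u])_1 = u_1, (ρ[u])_k = (ρ[u])_{k-1} + ρ(u_k). -/
def ordT (ρ : ℝ → ℝ) {K : ℕ} (u : Fin K → ℝ) : Fin K → ℝ :=
  fun k => u ⟨0, k.pos⟩ +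
    ∑ j ∈ Finset.univ.filter (fun j : Fin K => 0 < (j : ℕ) ∧ (j : ℕ) ≤ (k : ℕ)), ρ (u j)

/-- The Euclidean norm on ℝ^K. -/
def euclNorm {K : ℕ} (u : Fin K → ℝ) : ℝ :=
  Real.sqrt (∑ k, (u k) ^ 2)

/-- Euclidean distance from a point to a set. -/
def DH {K : ℕ} (u : Fin K → ℝ) (S : Set (Fin K → ℝ)) : ℝ :=
  sInf ((fun v => euclNorm (u - v)) '' S)

/-! The SL link reverses order, so `Psl s` is unimodal exactly where `-s` is. Since `ρ ≥ 0`,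
`ρ[u]` is monotone, and as `τ` falls and then rises, `-τ(ρ[u])` is unimodal at any minimiser
of `τ(ρ[u])`. Conversely a positive unimodal `p` has a score `-log p + const ≥ τ 0` of the
same shape; it is the image under `τ` of a monotone sequence, and every monotone sequence is
some `ρ[u]` because `ρ` is onto `[0, ∞)`. Hence the VSL part alone represents every positive
unimodal PMF, while a mixture stays within `r ‖q' - q‖ ≤ √2 r` of its unimodal VSL part `q`. -/

open Set Function Real

lemma simplex_eq_stdSimplex (K : ℕ) : simplex K = stdSimplex ℝ (Fin K) := by
  ext p
  exact ⟨fun ⟨hsum, hp⟩ => ⟨fun k => (hp k).1, hsum⟩,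
    fun hp => ⟨hp.2, fun k => mem_Icc_of_mem_stdSimplex hp k⟩⟩

lemma convex_simplex (K : ℕ) : Convex ℝ (simplex K) :=
  simplex_eq_stdSimplex K ▸ convex_stdSimplex ℝ (Fin K)

section Psl

variable {K : ℕ}

lemma psl_denom_pos (hK : 0 < K) (u : Fin K → ℝ) : 0 < ∑ k, exp (-(u k)) :=
  Finset.sum_pos (fun _ _ => exp_pos _) ⟨⟨0, hK⟩, Finset.mem_univ _⟩

lemma psl_pos (hK : 0 < K) (u : Fin K → ℝ) (y : Fin K) : 0 < Psl u y :=
  div_pos (exp_pos _) (psl_denom_pos hK u)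

lemma psl_mem_simplex (hK : 0 < K) (u : Fin K → ℝ) : Psl u ∈ simplex K := by
  rw [simplex_eq_stdSimplex]
  refine ⟨fun k => (psl_pos hK u k).le, ?_⟩
  unfold Psl
  rw [← Finset.sum_div, div_self (psl_denom_pos hK u).ne']

lemma psl_add_const (u : Fin K → ℝ) (c : ℝ) : Psl (fun k => u k + c) = Psl u := by
  ext y
  simp only [Psl, neg_add, exp_add, ← Finset.sum_mul]
  exact mul_div_mul_right _ _ (exp_ne_zero _)

lemma psl_neg_log {p : Fin K → ℝ} (hsum : ∑ k, p k = 1) (hpos : ∀ k, 0 < p k) :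
    Psl (fun k => -log (p k)) = p := by
  ext y
  simp only [Psl, neg_neg, exp_log (hpos _), hsum, div_one]

end Psl

section Unimodal

variable {ι β : Type*} [Preorder ι] [Preorder β]

def IsUnimodalAt (p : ι → β) (M : ι) : Prop :=
  (∀ k, p k ≤ p M) ∧ (∀ i j, i ≤ j → j ≤ M → p i ≤ p j) ∧ (∀ i j, M ≤ i → i ≤ j → p j ≤ p i)

lemma unimodal_iff_exists_isUnimodalAt {K : ℕ} (p : Fin K → ℝ) :
    Unimodal p ↔ ∃ M, IsUnimodalAt p M :=
  Iff.rfl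

lemma IsUnimodalAt.comp_monotoneOn {γ : Type*} [Preorder γ] {p : ι → β} {M : ι} {f : β → γ}
    {s : Set β} (h : IsUnimodalAt p M) (hf : MonotoneOn f s) (hs : ∀ k, p k ∈ s) :
    IsUnimodalAt (f ∘ p) M :=
  ⟨fun k => hf (hs k) (hs M) (h.1 k),
    fun i j hij hjM => hf (hs i) (hs j) (h.2.1 i j hij hjM),
    fun i j hMi hij => hf (hs j) (hs i) (h.2.2 i j hMi hij)⟩

lemma isUnimodalAt_psl {K : ℕ} (hK : 0 < K) {s : Fin K → ℝ} {M : Fin K}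
    (h : IsUnimodalAt (-s) M) : IsUnimodalAt (Psl s) M :=
  h.comp_monotoneOn (f := fun z => exp z / ∑ k, exp (-(s k)))
    (fun _ _ _ _ hab => div_le_div_of_nonneg_right (exp_le_exp.2 hab) (psl_denom_pos hK s).le)
    (fun _ => mem_univ _)

lemma isUnimodalAt_neg_comp_of_forall_le {τ : ℝ → ℝ} {c : ℝ} (hL : AntitoneOn τ (Iic c))
    (hR : MonotoneOn τ (Ici c)) {v : ι → ℝ} (hv : Monotone v) {M : ι}
    (hM : ∀ k, τ (v M) ≤ τ (v k)) : IsUnimodalAt (-(τ ∘ v)) M := by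
  refine ⟨fun k => neg_le_neg (hM k), fun i j hij hjM => neg_le_neg ?_,
    fun i j hMi hij => neg_le_neg ?_⟩
  · rcases le_total (v j) c with hj | hj
    · exact hL ((hv hij).trans hj) hj (hv hij)
    · exact (hR hj (hj.trans (hv hjM)) (hv hjM)).trans (hM i)
  · rcases le_total c (v i) with hi | hi
    · exact hR hi (hi.trans (hv hij)) (hv hij)
    · exact (hL ((hv hMi).trans hi) hi (hv hMi)).trans (hM j)

end Unimodal

section Preimage

variable {α β : Type*} [LinearOrder α] [LinearOrder β] {f : α → β} {g : β → α} {s : Set α}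
  {t : Set β}

lemma AntitoneOn.antitoneOn_of_rightInvOn (hf : AntitoneOn f s) (hg : MapsTo g t s)
    (hfg : RightInvOn g f t) : AntitoneOn g t := by
  intro a ha b hb hab
  by_contra! h
  have hba := hf (hg ha) (hg hb) h.le
  rw [hfg ha, hfg hb] at hba
  exact h.ne (congrArg g (le_antisymm hab hba))

lemma MonotoneOn.monotoneOn_of_rightInvOn (hf : MonotoneOn f s) (hg : MapsTo g t s)
    (hfg : RightInvOn g f t) : MonotoneOn g t := by
  intro a ha b hb hab
  by_contra! h
  have hba := hf (hg hb) (hg ha) h.le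
  rw [hfg ha, hfg hb] at hba
  exact h.ne' (congrArg g (le_antisymm hab hba))

lemma antitoneOn_Iic_of_antitoneOn_Iio {a : α} (hf : AntitoneOn f (Iio a))
    (ha : ∀ x ≤ a, f a ≤ f x) : AntitoneOn f (Iic a) := by
  intro x hx y hy hxy
  rcases (mem_Iic.1 hy).lt_or_eq with hya | rfl
  · exact hf (hxy.trans_lt hya) hya hxy
  · exact ha x hx

lemma monotoneOn_Ici_of_monotoneOn_Ioi {a : α} (hf : MonotoneOn f (Ioi a))
    (ha : ∀ x, a ≤ x → f a ≤ f x) : MonotoneOn f (Ici a) := by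
  intro x hx y hy hxy
  rcases (mem_Ici.1 hx).lt_or_eq with hax | rfl
  · exact hf hax (hax.trans_le hxy) hxy
  · exact ha y hy

end Preimage

/-- Preimages are taken through fixed sections of `τ` on `Iic c` and `Ici c`, so equal values
get equal preimages and the sections inherit (anti)monotonicity from `τ`. -/
lemma exists_monotone_comp_eq {ι : Type*} [LinearOrder ι] {τ : ℝ → ℝ} {c : ℝ} {T : Set ℝ}
    (hL : AntitoneOn τ (Iic c)) (hR : MonotoneOn τ (Ici c))
    (hLs : SurjOn τ (Iic c) T) (hRs : SurjOn τ (Ici c) T)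
    {t : ι → ℝ} (ht : ∀ k, t k ∈ T) {M : ι} (hM : IsUnimodalAt (-t) M) :
    ∃ v : ι → ℝ, Monotone v ∧ τ ∘ v = t := by
  have hgL := hL.antitoneOn_of_rightInvOn hLs.mapsTo_invFunOn hLs.rightInvOn_invFunOn
  have hgR := hR.monotoneOn_of_rightInvOn hRs.mapsTo_invFunOn hRs.rightInvOn_invFunOn
  refine ⟨fun k => if k ≤ M then invFunOn τ (Iic c) (t k) else invFunOn τ (Ici c) (t k),
    fun i j hij => ?_, funext fun k => ?_⟩
  · dsimp only
    split_ifs with hi hj hj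
    · exact hgL (ht j) (ht i) (neg_le_neg_iff.1 (hM.2.1 i j hij hj))
    · exact (hLs.mapsTo_invFunOn (ht i)).trans (hRs.mapsTo_invFunOn (ht j))
    · exact absurd (hij.trans hj) hi
    · exact hgR (ht i) (ht j) (neg_le_neg_iff.1 (hM.2.2 i j (not_le.1 hi).le hij))
  · dsimp only [comp]
    split_ifs
    exacts [hLs.rightInvOn_invFunOn (ht k), hRs.rightInvOn_invFunOn (ht k)]

section OrderingTransform

variable {K : ℕ} (ρ : ℝ → ℝ)

lemma ordT_zero (u : Fin K → ℝ) (h : 0 < K) : ordT ρ u ⟨0, h⟩ = u ⟨0, h⟩ := by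
  have hempty : Finset.univ.filter
      (fun j : Fin K => 0 < (j : ℕ) ∧ (j : ℕ) ≤ ((⟨0, h⟩ : Fin K) : ℕ)) = ∅ := by
    ext j; simp only [Finset.mem_filter, Finset.mem_univ, true_and, Finset.notMem_empty, iff_false]; omega
  rw [ordT, hempty, Finset.sum_empty, add_zero]

lemma ordT_succ (u : Fin K → ℝ) (n : ℕ) (h : n + 1 < K) :
    ordT ρ u ⟨n + 1, h⟩ = ordT ρ u ⟨n, by omega⟩ + ρ (u ⟨n + 1, h⟩) := by
  have hinsert : Finset.univ.filter (fun j : Fin K => 0 < (j : ℕ) ∧ (j : ℕ) ≤ n + 1)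
      = insert ⟨n + 1, h⟩ (Finset.univ.filter (fun j : Fin K => 0 < (j : ℕ) ∧ (j : ℕ) ≤ n)) := by
    ext j
    simp only [Finset.mem_filter, Finset.mem_insert, Finset.mem_univ, true_and, Fin.ext_iff]
    omega
  rw [ordT, ordT, hinsert, Finset.sum_insert (by simp)]
  ring

variable {ρ}

lemma monotone_ordT (hρ : ∀ z, 0 ≤ ρ z) (u : Fin K → ℝ) : Monotone (ordT ρ u) := by
  intro k k' hkk'
  refine add_le_add_right (Finset.sum_le_sum_of_subset_of_nonneg ?_ fun j _ _ => hρ _) _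
  intro j hj
  simp only [Finset.mem_filter, Finset.mem_univ, true_and] at hj ⊢
  exact ⟨hj.1, hj.2.trans hkk'⟩

lemma exists_ordT_eq (hρ : Ici 0 ⊆ range ρ) {v : Fin K → ℝ} (hv : Monotone v) :
    ∃ u, ordT ρ u = v := by
  let u : Fin K → ℝ := fun k =>
    if (k : ℕ) = 0 then v k else invFun ρ (v k - v ⟨k - 1, (Nat.sub_le _ _).trans_lt k.isLt⟩)
  have hu : ∀ n (h : n < K), ordT ρ u ⟨n, h⟩ = v ⟨n, h⟩ := by
    intro n
    induction n with
    | zero => intro h; simp [ordT_zero, u]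
    | succ n ih =>
      intro h
      have hinc : 0 ≤ v ⟨n + 1, h⟩ - v ⟨n, by omega⟩ :=
        sub_nonneg.2 (hv (Fin.mk_le_mk.2 n.le_succ))
      rw [ordT_succ, ih]
      simp only [u, Nat.add_one_ne_zero, if_false, Nat.add_sub_cancel, invFun_eq (hρ hinc)]
      ring
  exact ⟨u, funext fun k => hu k k.isLt⟩

end OrderingTransform

section Distance

variable {K : ℕ}

lemma euclNorm_smul (c : ℝ) (u : Fin K → ℝ) : euclNorm (c • u) = |c| * euclNorm u := by
  simp only [euclNorm, Pi.smul_apply, smul_eq_mul, mul_pow, ← Finset.mul_sum]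
  rw [sqrt_mul (sq_nonneg c), sqrt_sq_eq_abs]

lemma euclNorm_sub_le_sqrt_two {p q : Fin K → ℝ} (hp : p ∈ simplex K) (hq : q ∈ simplex K) :
    euclNorm (p - q) ≤ √2 := by
  have hterm : ∀ k, (p k - q k) ^ 2 ≤ p k + q k := fun k => by
    nlinarith [hp.2 k, hq.2 k]
  refine sqrt_le_sqrt ((Finset.sum_le_sum fun k _ => hterm k).trans_eq ?_)
  rw [Finset.sum_add_distrib, hp.1, hq.1]
  norm_num

lemma dH_le_of_mem {u q : Fin K → ℝ} {S : Set (Fin K → ℝ)} (hq : q ∈ S) :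
    DH u S ≤ euclNorm (u - q) :=
  csInf_le ⟨0, by rintro _ ⟨v, -, rfl⟩; exact sqrt_nonneg _⟩ ⟨q, hq, rfl⟩

lemma dH_smul_add_smul_le {q q' : Fin K → ℝ} {S : Set (Fin K → ℝ)} (hq : q ∈ S)
    (hS : S ⊆ simplex K) (hq' : q' ∈ simplex K) {r : ℝ} (hr : 0 ≤ r) :
    DH ((1 - r) • q + r • q') S ≤ √2 * r :=
  calc DH ((1 - r) • q + r • q') S ≤ euclNorm ((1 - r) • q + r • q' - q) := dH_le_of_mem hq
    _ = r * euclNorm (q' - q) := by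
      rw [show (1 - r) • q + r • q' - q = r • (q' - q) by module, euclNorm_smul, abs_of_nonneg hr]
    _ ≤ √2 * r := by
      rw [mul_comm]
      exact mul_le_mul_of_nonneg_right (euclNorm_sub_le_sqrt_two hq' (hS hq)) hr

end Distance

section VSL

variable {K : ℕ} {ρ τ : ℝ → ℝ} {c : ℝ}

lemma psl_ordT_mem_uniSimplex (hK : 0 < K) (hρ : ∀ z, 0 ≤ ρ z) (hL : AntitoneOn τ (Iic c))
    (hR : MonotoneOn τ (Ici c)) (u : Fin K → ℝ) :
    Psl (fun k => τ (ordT ρ u k)) ∈ uniSimplex K := by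
  obtain ⟨M, -, hM⟩ := Finset.univ.exists_min_image (fun k => τ (ordT ρ u k))
    ⟨⟨0, hK⟩, Finset.mem_univ _⟩
  exact ⟨psl_mem_simplex hK _, (unimodal_iff_exists_isUnimodalAt _).2 ⟨M, isUnimodalAt_psl hK
    (isUnimodalAt_neg_comp_of_forall_le hL hR (monotone_ordT hρ u) fun k => hM k (by simp))⟩⟩

/-- The SL score `-log p` is shifted so that its minimum, attained at a mode of `p`, is `τ c`. -/
lemma exists_psl_ordT_eq (hρ : Ici 0 ⊆ range ρ) (hL : AntitoneOn τ (Iic c))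
    (hR : MonotoneOn τ (Ici c)) (hLs : SurjOn τ (Iic c) (Ici (τ c)))
    (hRs : SurjOn τ (Ici c) (Ici (τ c))) {p : Fin K → ℝ} (hp : p ∈ uniSimplex K)
    (hpos : ∀ k, 0 < p k) : ∃ u, Psl (fun k => τ (ordT ρ u k)) = p := by
  obtain ⟨⟨hsum, -⟩, hmod⟩ := hp
  obtain ⟨M, hM⟩ := (unimodal_iff_exists_isUnimodalAt p).1 hmod
  set t : Fin K → ℝ := fun k => -log (p k) + (log (p M) + τ c) with ht_def
  have ht : ∀ k, t k ∈ Ici (τ c) := fun k => by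
    simp only [ht_def, mem_Ici]
    linarith [log_le_log (hpos k) (hM.1 k)]
  have htM : IsUnimodalAt (-t) M := by
    convert hM.comp_monotoneOn (strictMonoOn_log.monotoneOn.add_const (-(log (p M) + τ c)))
      hpos using 1
    ext k
    simp only [ht_def, Pi.neg_apply, comp_apply]
    ring
  obtain ⟨v, hv, hτv⟩ := exists_monotone_comp_eq hL hR hLs hRs ht htM
  obtain ⟨u, rfl⟩ := exists_ordT_eq hρ hv
  refine ⟨u, ?_⟩
  rw [show (fun k => τ (ordT ρ u k)) = t from hτv, ht_def, psl_add_const, psl_neg_log hsum hpos]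

end VSL

theorem stmt11_general (K d : ℕ) (hK : 3 ≤ K)
    (ρ : ℝ → ℝ) (hρ : Set.range ρ = Set.Ici (0 : ℝ))
    (τ : ℝ → ℝ)
    (hτ1 : AntitoneOn τ (Set.Iio 0)) (hτ2 : MonotoneOn τ (Set.Ioi 0))
    (hτ3 : τ '' Set.Iic 0 = Set.Ici (τ 0))
    (hτ4 : τ '' Set.Ici 0 = Set.Ici (τ 0))
    (r : ℝ) (hr0 : 0 ≤ r) (hr1 : r ≤ 1) :
    ({p : (Fin d → ℝ) → Fin K → ℝ | ∀ x, p x ∈ uniSimplex K ∧ ∀ k, p x k ≠ 0}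
      ⊆ {P : (Fin d → ℝ) → Fin K → ℝ |
          ∃ g1 g2 : (Fin d → ℝ) → Fin K → ℝ,
            ∀ x y, P x y
              = (1 - r) * Psl (fun k => τ (ordT ρ (g1 x) k)) y + r * Psl (g2 x) y})
    ∧ ({P : (Fin d → ℝ) → Fin K → ℝ |
          ∃ g1 g2 : (Fin d → ℝ) → Fin K → ℝ,
            ∀ x y, P x y
              = (1 - r) * Psl (fun k => τ (ordT ρ (g1 x) k)) y + r * Psl (g2 x) y}
      ⊆ {p : (Fin d → ℝ) → Fin K → ℝ |
          ∀ x, p x ∈ simplex K ∧ DH (p x) (uniSimplex K) ≤ Real.sqrt 2 * r ∧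
            ∀ k, p x k ≠ 0}) := by
  have hK0 : 0 < K := by omega
  have hτL : AntitoneOn τ (Iic 0) :=
    antitoneOn_Iic_of_antitoneOn_Iio hτ1 fun x hx => hτ3.subset (mem_image_of_mem τ hx)
  have hτR : MonotoneOn τ (Ici 0) :=
    monotoneOn_Ici_of_monotoneOn_Ioi hτ2 fun x hx => hτ4.subset (mem_image_of_mem τ hx)
  constructor
  · intro p hp
    have hpos : ∀ x k, 0 < p x k := fun x k => ((hp x).1.1.2 k).1.lt_of_ne' ((hp x).2 k)
    choose g1 hg1 using fun x =>
      exists_psl_ordT_eq hρ.ge hτL hτR hτ3.ge hτ4.ge (hp x).1 (hpos x)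
    refine ⟨g1, fun x k => -log (p x k), fun x y => ?_⟩
    rw [hg1, psl_neg_log (hp x).1.1.1 (hpos x)]
    ring
  · rintro P ⟨g1, g2, hP⟩ x
    have hq := psl_ordT_mem_uniSimplex hK0 (fun z => hρ.subset (mem_range_self z)) hτL hτR (g1 x)
    have hPx : P x = (1 - r) • Psl (fun k => τ (ordT ρ (g1 x) k)) + r • Psl (g2 x) :=
      funext (hP x)
    refine ⟨?_, hPx ▸ dH_smul_add_smul_le hq (fun _ h => h.1) (psl_mem_simplex hK0 _) hr0,
      fun k => ?_⟩
    · exact hPx ▸ convex_simplex K hq.1 (psl_mem_simplex hK0 _) (sub_nonneg.2 hr1) hr0 (by ring)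
    · rw [hP]
      exact ((convex_Ioi 0) (psl_pos hK0 _ k) (psl_pos hK0 _ k) (sub_nonneg.2 hr1) hr0
        (by ring)).ne'

/-- Corollary: for the mixture of the VSL model and the SL
model, the representation ability is sandwiched between the unimodal
positive maps and the (√2·r)-approximately unimodal positive maps. -/
theorem stmt11 (K d : ℕ) (hK : 3 ≤ K) (hd : 1 ≤ d)
    (ρ : ℝ → ℝ) (hρ : Set.range ρ = Set.Ici (0 : ℝ))
    (τ : ℝ → ℝ)
    (hτ1 : AntitoneOn τ (Set.Iio 0)) (hτ2 : MonotoneOn τ (Set.Ioi 0))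
    (hτ3 : τ '' Set.Iic 0 = Set.Ici (τ 0))
    (hτ4 : τ '' Set.Ici 0 = Set.Ici (τ 0))
    (r : ℝ) (hr0 : 0 ≤ r) (hr1 : r ≤ 1) :
    ({p : (Fin d → ℝ) → Fin K → ℝ | ∀ x, p x ∈ uniSimplex K ∧ ∀ k, p x k ≠ 0}
      ⊆ {P : (Fin d → ℝ) → Fin K → ℝ |
          ∃ g1 g2 : (Fin d → ℝ) → Fin K → ℝ,
            ∀ x y, P x y
              = (1 - r) * Psl (fun k => τ (ordT ρ (g1 x) k)) y + r * Psl (g2 x) y})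
    ∧ ({P : (Fin d → ℝ) → Fin K → ℝ |
          ∃ g1 g2 : (Fin d → ℝ) → Fin K → ℝ,
            ∀ x y, P x y
              = (1 - r) * Psl (fun k => τ (ordT ρ (g1 x) k)) y + r * Psl (g2 x) y}
      ⊆ {p : (Fin d → ℝ) → Fin K → ℝ |
          ∀ x, p x ∈ simplex K ∧ DH (p x) (uniSimplex K) ≤ Real.sqrt 2 * r ∧
            ∀ k, p x k ≠ 0}) :=
  stmt11_general K d hK ρ hρ τ hτ1 hτ2 hτ3 hτ4 r hr0 hr1
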